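/- arXiv:2010.08266 — 5 statements merged into one kernel-verified Lean document; each statement's English description precedes it below -/
import Mathlib

section
/- Let G and H be non-isomorphic graphs of order n with b(G,H) ≥ 1, let G⁺ be a supercard of G and H with distinguished vertices v, w such that G⁺ − w ≅ G and G⁺ − v ≅ H. If Y ⊆ B_{vw}(G⁺) contains the identity permutation and satisfies that for all distinct λ, π ∈ Y we have λ⁻¹(v) ≠ π⁻¹(v) and λ(w) ≠ π(w), then Y is maximal with respect to these properties if and only if |Y| = b(G, H). In particular, all maximum saturating sets of B_{vw}(G⁺) have cardinality b(G, H). -/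
open SimpleGraph

/-- The degree of a vertex, defined via the neighbour set. -/
noncomputable def deg {V : Type*} (G : SimpleGraph V) (v : V) : ℕ := (G.neighborSet v).ncard

/-- `tau G v` is the number of neighbours of `v` of degree 2 in `G`. -/
noncomputable def tau {V : Type*} (G : SimpleGraph V) (v : V) : ℕ :=
  {u ∈ G.neighborSet v | deg G u = 2}.ncard

/-- A (finite) graph is a cycle graph iff it is connected and 2-regular. -/
def IsCycleGraph {V : Type*} (G : SimpleGraph V) : Prop := G.Connected ∧ ∀ v, deg G v = 2

/-- A (finite) graph is a path graph iff it is a connected acyclic graph with maximum degree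
at most two. -/
def IsPathGraph {V : Type*} (G : SimpleGraph V) : Prop :=
  G.Connected ∧ G.IsAcyclic ∧ ∀ v, deg G v ≤ 2

/-- The skeleton of `G`: the induced subgraph on vertices of degree at least 2
(i.e. delete all leaves and isolated vertices). -/
def skeleton {V : Type*} (G : SimpleGraph V) : SimpleGraph {v : V | 2 ≤ deg G v} :=
  G.induce {v : V | 2 ≤ deg G v}

/-- A sunshine graph: a connected graph whose skeleton is a cycle. -/
def IsSunshine {V : Type*} (G : SimpleGraph V) : Prop := G.Connected ∧ IsCycleGraph (skeleton G)

/-- A caterpillar: a connected graph whose skeleton is a path. -/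
def IsCaterpillar {V : Type*} (G : SimpleGraph V) : Prop := G.Connected ∧ IsPathGraph (skeleton G)

/-- The diameter of a finite graph: the maximum distance between two vertices. -/
noncomputable def diamNat {V : Type*} (G : SimpleGraph V) : ℕ :=
  sSup (Set.range fun p : V × V => G.dist p.1 p.2)

/-- Graphs on `Fin n` up to isomorphism. -/
def graphSetoid (n : ℕ) : Setoid (SimpleGraph (Fin n)) where
  r G H := Nonempty (G ≃g H)
  iseqv := ⟨fun G => ⟨Iso.refl⟩, fun ⟨e⟩ => ⟨e.symm⟩, fun ⟨e⟩ ⟨f⟩ => ⟨e.trans f⟩⟩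

/-- Isomorphism classes of graphs on `n` vertices. -/
abbrev IsoClass (n : ℕ) : Type := Quotient (graphSetoid n)

/-- The card `G - v`, transported to a graph on `Fin (|V| - 1)`. -/
noncomputable def cardAt {V : Type*} [Fintype V] [DecidableEq V] (G : SimpleGraph V) (v : V) :
    SimpleGraph (Fin (Fintype.card V - 1)) :=
  G.comap fun i =>
    ((Fintype.equivOfCardEq
      (show Fintype.card (Fin (Fintype.card V - 1)) = Fintype.card {u : V // u ≠ v} by
        simp [Fintype.card_subtype_compl])) i : {u : V // u ≠ v}).val

/-- The deck of `G` : the multiset of isomorphism classes of its vertex-deleted subgraphs. -/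
noncomputable def deck {V : Type*} [Fintype V] [DecidableEq V] (G : SimpleGraph V) :
    Multiset (IsoClass (Fintype.card V - 1)) :=
  Finset.univ.val.map fun v => Quotient.mk (graphSetoid (Fintype.card V - 1)) (cardAt G v)

/-- The number of common cards of `G` and `H` : the cardinality of the multiset
intersection of their decks. -/
noncomputable def commonCards {V : Type*} [Fintype V] [DecidableEq V]
    (G H : SimpleGraph V) : ℕ :=
  letI := Classical.decEq (IsoClass (Fintype.card V - 1))
  Multiset.card (deck G ∩ deck H)

/-- `Gp` is a supercard of `G` : some card of `Gp` is isomorphic to `G`. -/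
def IsSupercardOf {W V : Type*} (Gp : SimpleGraph W) (G : SimpleGraph V) : Prop :=
  ∃ w : W, Nonempty (G ≃g Gp.induce {u : W | u ≠ w})

/-- `l` is an active permutation of `Gp` with respect to `v` and `w`:
`l ((Gp - w) - l⁻¹ v) = (Gp - v) - l w`. -/
def ActivePerm {V : Type*} (Gp : SimpleGraph V) (v w : V) (l : Equiv.Perm V) : Prop :=
  ∀ a b : V, a ≠ w → a ≠ l.symm v → b ≠ w → b ≠ l.symm v → (Gp.Adj a b ↔ Gp.Adj (l a) (l b))

/-- Property (b) of a saturating set: distinct permutations have distinct `l⁻¹ v` and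
distinct `l w`. -/
def SatProp {V : Type*} (v w : V) (Y : Set (Equiv.Perm V)) : Prop :=
  ∀ l ∈ Y, ∀ p ∈ Y, l ≠ p → l.symm v ≠ p.symm v ∧ l w ≠ p w

/-- `θ` maps `Up - w` isomorphically onto `Up - θ w` (the defining property of `B_U`). -/
def IsCardIso {V : Type*} (Up : SimpleGraph V) (w : V) (θ : Equiv.Perm V) : Prop :=
  ∀ a b : V, a ≠ w → b ≠ w → (Up.Adj a b ↔ Up.Adj (θ a) (θ b))

/-- `θ` is an automorphism of `G`. -/
def IsAutG {V : Type*} (G : SimpleGraph V) (θ : Equiv.Perm V) : Prop :=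
  ∀ a b, G.Adj (θ a) (θ b) ↔ G.Adj a b

/-- A d-leaf: a leaf, in a component of order at least three, all of whose neighbours have
degree at least 3. -/
def IsDLeaf {V : Type*} (G : SimpleGraph V) (v : V) : Prop :=
  deg G v = 1 ∧ 3 ≤ (G.connectedComponentMk v).supp.ncard ∧ ∀ u, G.Adj v u → 3 ≤ deg G u

/-- A peripheral leaf: a leaf at the end of some longest path. -/
def IsPeripheralLeaf {V : Type*} (G : SimpleGraph V) (v : V) : Prop :=
  deg G v = 1 ∧ ∃ (u : V) (p : G.Walk v u), p.IsPath ∧ p.length = diamNat G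

/-- An endpoint of the skeleton path: a skeleton vertex of skeleton-degree at most 1. -/
def IsSkelEndpoint {V : Type*} (G : SimpleGraph V) (y : V) : Prop :=
  ∃ h : 2 ≤ deg G y, deg (skeleton G) ⟨y, h⟩ ≤ 1

/-! An active permutation `λ` restricts to an isomorphism `(G⁺ - w) - λ⁻¹ v ≅ (G⁺ - v) - λ w`, and
since `G ≇ H` we have `λ⁻¹ v ≠ w`, so this is an isomorphism between a card of `G` and a card of
`H`. Conversely every isomorphism between a card of `G` and a card of `H` extends to an active
permutation. Hence a saturating set is the same as a matching in the bipartite graph joining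
isomorphic cards of `G` and `H`. That graph is a disjoint union of complete bipartite graphs, one
for each isomorphism class `c` of cards, with sides of sizes `m_G(c)` and `m_H(c)`; a matching in
it is maximal iff it has `min (m_G(c), m_H(c))` edges in every class, i.e. `b(G, H)` edges in
all. -/

open Finset

section Matching

variable {α β C : Type*} [Fintype α] [Fintype β] [DecidableEq C]

lemma exists_forall_ne_iff_card_filter_lt [DecidableEq α] {σ : Type*} {s : Finset σ} {π : σ → α}
    (hπ : Set.InjOn π s) (f : α → C) (c : C) :
    (∃ a, f a = c ∧ ∀ x ∈ s, π x ≠ a) ↔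
      #(s.filter fun x => f (π x) = c) < #(univ.filter (f · = c)) := by
  have hsub : (s.filter fun x => f (π x) = c).image π ⊆ univ.filter (f · = c) := by
    intro a ha
    obtain ⟨x, hx, rfl⟩ := mem_image.1 ha
    exact mem_filter.2 ⟨mem_univ _, (mem_filter.1 hx).2⟩
  rw [← card_image_of_injOn (hπ.mono (coe_subset.2 (filter_subset _ _)))]
  constructor
  · rintro ⟨a, rfl, ha⟩
    refine card_lt_card ⟨hsub, fun h => ?_⟩
    obtain ⟨x, hx, hxa⟩ := mem_image.1 (h (mem_filter.2 ⟨mem_univ a, rfl⟩))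
    exact ha x (mem_filter.1 hx).1 hxa
  · intro hlt
    obtain ⟨a, ha, ha'⟩ := exists_mem_notMem_of_card_lt_card hlt
    refine ⟨a, (mem_filter.1 ha).2, fun x hx hxa => ha' (mem_image.2 ⟨x, ?_, hxa⟩)⟩
    exact mem_filter.2 ⟨hx, hxa ▸ (mem_filter.1 ha).2⟩

variable {f : α → C} {g : β → C} {M : Finset (α × β)}

lemma exists_unmatched_iff_exists_card_filter_lt_min [DecidableEq α] [DecidableEq β]
    (hM : ∀ p ∈ M, f p.1 = g p.2) (hfst : Set.InjOn Prod.fst (M : Set (α × β)))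
    (hsnd : Set.InjOn Prod.snd (M : Set (α × β))) :
    (∃ a b, f a = g b ∧ ∀ p ∈ M, p.1 ≠ a ∧ p.2 ≠ b) ↔
      ∃ c, #(M.filter (f ·.1 = c)) < min #(univ.filter (f · = c)) #(univ.filter (g · = c)) := by
  have hfilter (c : C) : M.filter (g ·.2 = c) = M.filter (f ·.1 = c) :=
    filter_congr fun p hp => by rw [hM p hp]
  have hsnd_side (c : C) := exists_forall_ne_iff_card_filter_lt hsnd g c
  simp only [hfilter] at hsnd_side
  simp only [lt_min_iff, ← exists_forall_ne_iff_card_filter_lt hfst f, ← hsnd_side]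
  constructor
  · rintro ⟨a, b, hab, hfree⟩
    exact ⟨f a, ⟨a, rfl, fun p hp => (hfree p hp).1⟩, ⟨b, hab.symm, fun p hp => (hfree p hp).2⟩⟩
  · rintro ⟨c, ⟨a, rfl, ha⟩, ⟨b, hb, hb'⟩⟩
    exact ⟨a, b, hb.symm, fun p hp => ⟨ha p hp, hb' p hp⟩⟩

lemma card_filter_fst_le_min (hM : ∀ p ∈ M, f p.1 = g p.2)
    (hfst : Set.InjOn Prod.fst (M : Set (α × β))) (hsnd : Set.InjOn Prod.snd (M : Set (α × β)))
    (c : C) :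
    #(M.filter (f ·.1 = c)) ≤ min #(univ.filter (f · = c)) #(univ.filter (g · = c)) :=
  le_min
    (card_le_card_of_injOn Prod.fst (fun p hp => by simpa using (mem_filter.1 hp).2)
      (hfst.mono (coe_subset.2 (filter_subset _ _))))
    (card_le_card_of_injOn Prod.snd
      (fun p hp => by simpa [← hM p (mem_filter.1 hp).1] using (mem_filter.1 hp).2)
      (hsnd.mono (coe_subset.2 (filter_subset _ _))))

lemma card_inter_map_univ_eq_sum_min (f : α → C) (g : β → C) :
    Multiset.card (univ.val.map f ∩ univ.val.map g) =
      ∑ c ∈ univ.image f, min #(univ.filter (f · = c)) #(univ.filter (g · = c)) := by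
  rw [← Multiset.sum_count_eq_card (s := univ.image f)]
  · refine sum_congr rfl fun c _ => ?_
    simp [Multiset.count_inter, Multiset.count_map, Finset.card_def, eq_comm]
  · intro c hc
    simpa using Multiset.mem_of_le (Multiset.inter_le_left) hc

theorem not_exists_unmatched_iff_card_eq [DecidableEq α] [DecidableEq β]
    (hM : ∀ p ∈ M, f p.1 = g p.2)
    (hfst : Set.InjOn Prod.fst (M : Set (α × β))) (hsnd : Set.InjOn Prod.snd (M : Set (α × β))) :
    (¬ ∃ a b, f a = g b ∧ ∀ p ∈ M, p.1 ≠ a ∧ p.2 ≠ b) ↔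
      #M = Multiset.card (univ.val.map f ∩ univ.val.map g) := by
  rw [card_eq_sum_card_fiberwise (f := fun p => f p.1) (t := univ.image f)
      (fun p _ => mem_image_of_mem f (mem_univ _)),
    card_inter_map_univ_eq_sum_min,
    sum_eq_sum_iff_of_le fun c _ => card_filter_fst_le_min hM hfst hsnd c,
    exists_unmatched_iff_exists_card_filter_lt_min hM hfst hsnd]
  push Not
  refine ⟨fun h c _ => (card_filter_fst_le_min hM hfst hsnd c).antisymm (h c), fun h c => ?_⟩
  by_cases hc : c ∈ univ.image f
  · exact (h c hc).ge
  · have hempty : univ.filter (f · = c) = ∅ :=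
      filter_eq_empty_iff.2 fun a _ ha => hc (ha ▸ mem_image_of_mem f (mem_univ a))
    simp [hempty]

end Matching

namespace SimpleGraph

variable {V W : Type*}

lemma nonempty_induce_iso_of_bijOn {G : SimpleGraph V} {G' : SimpleGraph W} {f : V → W}
    {s : Set V} {t : Set W} (hf : Set.BijOn f s t)
    (hadj : ∀ a ∈ s, ∀ b ∈ s, G'.Adj (f a) (f b) ↔ G.Adj a b) :
    Nonempty (G.induce s ≃g G'.induce t) :=
  ⟨⟨hf.equiv f, fun {a b} => hadj a a.2 b b.2⟩⟩

lemma nonempty_cardAt_iso [Fintype V] [DecidableEq V] (G : SimpleGraph V) (u : V) :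
    Nonempty (cardAt G u ≃g G.induce {x | x ≠ u}) :=
  ⟨Iso.comap (Fintype.equivOfCardEq (α := Fin _) (β := {x // x ≠ u})
    (by simp [Fintype.card_subtype_compl])) (G.induce {x | x ≠ u})⟩

lemma Iso.nonempty_induce_ne_iso {G : SimpleGraph W} {Gp : SimpleGraph V} {w : V}
    (φ : G ≃g Gp.induce {x | x ≠ w}) (u : W) :
    Nonempty (G.induce {x | x ≠ u} ≃g Gp.induce {a | a ≠ w ∧ a ≠ φ u}) := by
  refine nonempty_induce_iso_of_bijOn (f := fun x => (φ x : V)) ⟨?_, ?_, ?_⟩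
    fun a _ b _ => φ.map_adj_iff
  · exact fun x hx => ⟨(φ x).2, fun h => hx (φ.injective (Subtype.ext h))⟩
  · exact fun x _ y _ h => φ.injective (Subtype.ext h)
  · intro a ⟨haw, hau⟩
    refine ⟨φ.symm ⟨a, haw⟩, fun h => hau ?_, by simp⟩
    rw [← h, RelIso.apply_symm_apply]

lemma nonempty_cardAt_iso_of_iso [Fintype W] [DecidableEq W] {G : SimpleGraph W}
    {Gp : SimpleGraph V} {w : V} (φ : G ≃g Gp.induce {x | x ≠ w}) (u : W) :
    Nonempty (cardAt G u ≃g Gp.induce {a | a ≠ w ∧ a ≠ φ u}) :=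
  let ⟨e₁⟩ := nonempty_cardAt_iso G u
  let ⟨e₂⟩ := φ.nonempty_induce_ne_iso u
  ⟨e₁.trans e₂⟩

end SimpleGraph

namespace ActivePerm

variable {V : Type*} {Gp : SimpleGraph V} {v w : V} {σ : Equiv.Perm V}

lemma nonempty_iso (hσ : ActivePerm Gp v w σ) :
    Nonempty (Gp.induce {a | a ≠ w ∧ a ≠ σ.symm v} ≃g Gp.induce {a | a ≠ v ∧ a ≠ σ w}) := by
  refine nonempty_induce_iso_of_bijOn (σ.bijOn fun a => ?_)
    fun a ha b hb => (hσ a b ha.1 ha.2 hb.1 hb.2).symm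
  show σ a ≠ v ∧ σ a ≠ σ w ↔ a ≠ w ∧ a ≠ σ.symm v
  simp only [σ.injective.ne_iff, ne_eq, ← σ.eq_symm_apply]
  exact and_comm

lemma nonempty_iso_of_symm_apply_eq (hσ : ActivePerm Gp v w σ) (h : σ.symm v = w) :
    Nonempty (Gp.induce {a | a ≠ w} ≃g Gp.induce {a | a ≠ v}) := by
  refine nonempty_induce_iso_of_bijOn (σ.bijOn fun a => ?_)
    fun a ha b hb => (hσ a b ha (h ▸ ha) hb (h ▸ hb)).symm
  show σ a ≠ v ↔ a ≠ w
  simp only [← h, ne_eq, ← σ.eq_symm_apply]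

end ActivePerm

lemma exists_activePerm_of_iso {V : Type*} [Finite V] [DecidableEq V] {Gp : SimpleGraph V}
    {v w x y : V} (hx : x ≠ w)
    (ψ : Gp.induce {a | a ≠ w ∧ a ≠ x} ≃g Gp.induce {a | a ≠ v ∧ a ≠ y}) :
    ∃ σ : Equiv.Perm V, ActivePerm Gp v w σ ∧ σ.symm v = x ∧ σ w = y := by
  set τ := ψ.toEquiv.extendSubtype
  have hτ (a) (ha : a ≠ w ∧ a ≠ x) : τ a = ψ ⟨a, ha⟩ := ψ.toEquiv.extendSubtype_apply_of_mem a ha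
  have hτw : τ w = v ∨ τ w = y :=
    or_iff_not_imp_left.2 (by simpa using ψ.toEquiv.extendSubtype_not_mem w (by simp))
  have hτx : τ x = v ∨ τ x = y :=
    or_iff_not_imp_left.2 (by simpa using ψ.toEquiv.extendSubtype_not_mem x (by simp))
  have hτxw : τ x ≠ τ w := τ.injective.ne hx
  -- `τ` sends `{w, x}` onto `{v, y}`, possibly the wrong way round: correct it by a swap
  set σ := Equiv.swap (τ w) y * τ
  have hσ (a) (ha : a ≠ w ∧ a ≠ x) : σ a = ψ ⟨a, ha⟩ := by
    have hτa := (ψ ⟨a, ha⟩).2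
    rw [← hτ a ha] at hτa ⊢
    exact Equiv.swap_apply_of_ne_of_ne (τ.injective.ne ha.1) hτa.2
  have hσx : σ x = v := by
    rcases hτw with h | h <;> rcases hτx with h' | h' <;>
      simp_all [σ, Equiv.swap_apply_def]
  refine ⟨σ, fun a b ha ha' hb hb' => ?_, σ.symm_apply_eq.2 hσx.symm, Equiv.swap_apply_left _ _⟩
  rw [σ.symm_apply_eq.2 hσx.symm] at ha' hb'
  rw [hσ a ⟨ha, ha'⟩, hσ b ⟨hb, hb'⟩]
  exact (ψ.map_adj_iff (v := ⟨a, ha, ha'⟩) (w := ⟨b, hb, hb'⟩)).symm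

noncomputable def cardClass {W : Type*} [Fintype W] [DecidableEq W] (G : SimpleGraph W) (u : W) :
    IsoClass (Fintype.card W - 1) :=
  Quotient.mk (graphSetoid _) (cardAt G u)

lemma satProp_insert_iff {V : Type*} {v w : V} {Y : Set (Equiv.Perm V)} {σ : Equiv.Perm V}
    (hY : SatProp v w Y) :
    SatProp v w (insert σ Y) ↔ ∀ l ∈ Y, σ ≠ l → σ.symm v ≠ l.symm v ∧ σ w ≠ l w := by
  change (insert σ Y).Pairwise _ ↔ _
  rw [Set.pairwise_insert]
  exact ⟨fun h l hl hne => (h.2 l hl hne).1,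
    fun h => ⟨hY, fun l hl hne => ⟨h l hl hne, (h l hl hne).imp Ne.symm Ne.symm⟩⟩⟩

section Supercard

variable {V W : Type*} {Gp : SimpleGraph V} {v w : V}
  {G H : SimpleGraph W} (φG : G ≃g Gp.induce {x | x ≠ w}) (φH : H ≃g Gp.induce {x | x ≠ v})
  {σ : Equiv.Perm V} {Y : Set (Equiv.Perm V)}

lemma ActivePerm.exists_iso_apply_eq (hGH : IsEmpty (G ≃g H)) (hσ : ActivePerm Gp v w σ) :
    ∃ p : W × W, (φG p.1 : V) = σ.symm v ∧ (φH p.2 : V) = σ w := by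
  have hv : σ.symm v ≠ w := fun h =>
    let ⟨e⟩ := hσ.nonempty_iso_of_symm_apply_eq h
    hGH.elim (φG.trans (e.trans φH.symm))
  have hw : σ w ≠ v := fun h => hv (σ.symm_apply_eq.2 h.symm)
  exact ⟨(φG.symm ⟨_, hv⟩, φH.symm ⟨_, hw⟩), by simp, by simp⟩

variable [Fintype W]

lemma cardClass_eq_iff [DecidableEq W] [Finite V] [DecidableEq V] (a b : W) :
    cardClass G a = cardClass H b ↔
      ∃ σ : Equiv.Perm V, ActivePerm Gp v w σ ∧ σ.symm v = φG a ∧ σ w = φH b := by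
  obtain ⟨e₁⟩ := nonempty_cardAt_iso_of_iso φG a
  obtain ⟨e₂⟩ := nonempty_cardAt_iso_of_iso φH b
  refine Quotient.eq.trans
    ⟨fun ⟨e⟩ => exists_activePerm_of_iso (φG a).2 (e₁.symm.trans (e.trans e₂)), ?_⟩
  rintro ⟨σ, hσ, hv, hw⟩
  obtain ⟨e⟩ := hv ▸ hw ▸ hσ.nonempty_iso
  exact ⟨e₁.trans (e.trans e₂.symm)⟩

open Classical in
noncomputable def activeMatching (Y : Set (Equiv.Perm V)) : Finset (W × W) :=
  univ.filter fun p => ∃ l ∈ Y, l.symm v = φG p.1 ∧ l w = φH p.2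

lemma mem_activeMatching {p : W × W} :
    p ∈ activeMatching φG φH Y ↔ ∃ l ∈ Y, l.symm v = φG p.1 ∧ l w = φH p.2 := by
  simp [activeMatching]

lemma cardClass_eq_of_mem_activeMatching [DecidableEq W] [Finite V] [DecidableEq V]
    (hY : ∀ l ∈ Y, ActivePerm Gp v w l) :
    ∀ p ∈ activeMatching φG φH Y, cardClass G p.1 = cardClass H p.2 := fun _ hp =>
  let ⟨l, hl, hv, hw⟩ := (mem_activeMatching φG φH).1 hp
  (cardClass_eq_iff φG φH _ _).2 ⟨l, hY l hl, hv, hw⟩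

lemma eq_of_mem_activeMatching (hsat : SatProp v w Y) {p q : W × W}
    (hp : p ∈ activeMatching φG φH Y) (hq : q ∈ activeMatching φG φH Y)
    (h : p.1 = q.1 ∨ p.2 = q.2) : p = q := by
  obtain ⟨l, hl, hpv, hpw⟩ := (mem_activeMatching φG φH).1 hp
  obtain ⟨l', hl', hqv, hqw⟩ := (mem_activeMatching φG φH).1 hq
  obtain rfl : l = l' := by
    by_contra hne
    have hsep := hsat l hl l' hl' hne
    rcases h with h | h
    · exact hsep.1 (by rw [hpv, hqv, h])
    · exact hsep.2 (by rw [hpw, hqw, h])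
  exact Prod.ext (φG.injective (Subtype.ext (hpv.symm.trans hqv)))
    (φH.injective (Subtype.ext (hpw.symm.trans hqw)))

lemma card_activeMatching (hGH : IsEmpty (G ≃g H)) (hY : ∀ l ∈ Y, ActivePerm Gp v w l)
    (hsat : SatProp v w Y) : #(activeMatching φG φH Y) = Y.ncard := by
  choose pair hpair using fun l (hl : l ∈ Y) => (hY l hl).exists_iso_apply_eq φG φH hGH
  have hmem (l) (hl : l ∈ Y) : pair l hl ∈ activeMatching φG φH Y :=
    (mem_activeMatching φG φH).2 ⟨l, hl, (hpair l hl).1.symm, (hpair l hl).2.symm⟩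
  rw [← Set.ncard_coe_finset]
  refine (Set.ncard_congr pair hmem (fun l l' hl hl' h => ?_) (fun p hp => ?_)).symm
  · by_contra hne
    exact (hsat l hl l' hl' hne).1 (by rw [← (hpair l hl).1, ← (hpair l' hl').1, h])
  · obtain ⟨l, hl, hv, -⟩ := (mem_activeMatching φG φH).1 hp
    exact ⟨l, hl, eq_of_mem_activeMatching φG φH hsat (hmem l hl) hp
      (.inl (φG.injective (Subtype.ext ((hpair l hl).1.trans hv))))⟩

lemma exists_saturating_extension_iff [DecidableEq W] [Finite V] [DecidableEq V]
    (hGH : IsEmpty (G ≃g H))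
    (hY : ∀ l ∈ Y, ActivePerm Gp v w l) (hsat : SatProp v w Y) :
    (∃ σ, ActivePerm Gp v w σ ∧ σ ∉ Y ∧ SatProp v w (insert σ Y)) ↔
      ∃ a b, cardClass G a = cardClass H b ∧ ∀ p ∈ activeMatching φG φH Y, p.1 ≠ a ∧ p.2 ≠ b := by
  constructor
  · rintro ⟨σ, hσ, hσY, hins⟩
    obtain ⟨⟨a, b⟩, ha, hb⟩ := hσ.exists_iso_apply_eq φG φH hGH
    refine ⟨a, b, (cardClass_eq_iff φG φH a b).2 ⟨σ, hσ, ha.symm, hb.symm⟩, fun p hp => ?_⟩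
    obtain ⟨l, hl, hlv, hlw⟩ := (mem_activeMatching φG φH).1 hp
    have hsep := (satProp_insert_iff hsat).1 hins l hl (ne_of_mem_of_not_mem hl hσY).symm
    exact ⟨fun h => hsep.1 (by rw [← ha, hlv, h]), fun h => hsep.2 (by rw [← hb, hlw, h])⟩
  · rintro ⟨a, b, hab, hfree⟩
    obtain ⟨σ, hσ, ha, hb⟩ := (cardClass_eq_iff φG φH a b).1 hab
    have hσY : σ ∉ Y := fun hσY =>
      (hfree (a, b) ((mem_activeMatching φG φH).2 ⟨σ, hσY, ha, hb⟩)).1 rfl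
    refine ⟨σ, hσ, hσY, (satProp_insert_iff hsat).2 fun l hl _ => ?_⟩
    obtain ⟨p, hpv, hpw⟩ := (hY l hl).exists_iso_apply_eq φG φH hGH
    have hp := (hfree p ((mem_activeMatching φG φH).2 ⟨l, hl, hpv.symm, hpw.symm⟩))
    exact ⟨fun h => hp.1 (φG.injective (Subtype.ext (by rw [hpv, ← h, ha]))),
      fun h => hp.2 (φH.injective (Subtype.ext (by rw [hpw, ← h, hb])))⟩

end Supercard

theorem stmt3_general (n : ℕ) (G H : SimpleGraph (Fin n)) (hni : IsEmpty (G ≃g H))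
    (Gp : SimpleGraph (Fin (n + 1))) (v w : Fin (n + 1))
    (hG : Nonempty (G ≃g Gp.induce {u : Fin (n + 1) | u ≠ w}))
    (hH : Nonempty (H ≃g Gp.induce {u : Fin (n + 1) | u ≠ v}))
    (Y : Set (Equiv.Perm (Fin (n + 1)))) (hYB : ∀ l ∈ Y, ActivePerm Gp v w l)
    (hsat : SatProp v w Y) :
    (¬ ∃ σ : Equiv.Perm (Fin (n + 1)),
        ActivePerm Gp v w σ ∧ σ ∉ Y ∧ SatProp v w (insert σ Y)) ↔
      Y.ncard = commonCards G H := by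
  obtain ⟨φG⟩ := hG
  obtain ⟨φH⟩ := hH
  -- the decidable equality `commonCards` is defined with
  let _ : DecidableEq (IsoClass (Fintype.card (Fin n) - 1)) := Classical.decEq _
  rw [← card_activeMatching φG φH hni hYB hsat, exists_saturating_extension_iff φG φH hni hYB hsat]
  exact not_exists_unmatched_iff_card_eq (cardClass_eq_of_mem_activeMatching φG φH hYB)
    (fun p hp q hq h => eq_of_mem_activeMatching φG φH hsat hp hq (.inl h))
    (fun p hp q hq h => eq_of_mem_activeMatching φG φH hsat hp hq (.inr h))

theorem stmt3 (n : ℕ) (G H : SimpleGraph (Fin n)) (hni : IsEmpty (G ≃g H))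
    (hb : 1 ≤ commonCards G H) (Gp : SimpleGraph (Fin (n + 1))) (v w : Fin (n + 1))
    (hG : Nonempty (G ≃g Gp.induce {u : Fin (n + 1) | u ≠ w}))
    (hH : Nonempty (H ≃g Gp.induce {u : Fin (n + 1) | u ≠ v}))
    (Y : Set (Equiv.Perm (Fin (n + 1)))) (hYB : ∀ l ∈ Y, ActivePerm Gp v w l)
    (hid : 1 ∈ Y) (hsat : SatProp v w Y) :
    (¬ ∃ σ : Equiv.Perm (Fin (n + 1)),
        ActivePerm Gp v w σ ∧ σ ∉ Y ∧ SatProp v w (insert σ Y)) ↔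
      Y.ncard = commonCards G H :=
  stmt3_general n G H hni Gp v w hG hH Y hYB hsat
end

section
/- Let U⁺ be a sunshine graph of order n+1 with skeleton cycle x₀…x_{c−1}x₀ that is a supercard of a sunshine graph U = U⁺ − w (w a leaf adjacent to x₀) and a caterpillar T = U⁺ − x_ν (with d_{U⁺}(x_ν) = 2). If λ is an active permutation in B_{vw}(U⁺), then λ⁻¹(x_ν) lies on the skeleton cycle of U, say λ⁻¹(x_ν) = x_μ, and d_U(x_μ) = d_T(λ(w)) + 1. -/
/-!
Deleting a vertex of degree `d` deletes exactly `d` edges, so `U = U⁺ - w` has one edge more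
than `T = U⁺ - x_ν`. An active permutation `λ` is an isomorphism `U - λ⁻¹ x_ν ≅ T - λ w`; if
`λ w = x_ν` it would be an isomorphism `U ≅ T`, which the edge count forbids. Comparing the edge
counts of the two isomorphic cards gives `d_U(λ⁻¹ x_ν) = d_T(λ w) + 1`, and `d_T(λ w) ≥ 1`
because `T` is connected and has at least two vertices (the neighbours of `x_ν`).
-/

open SimpleGraph

namespace SimpleGraph

variable {V W : Type*}

lemma Iso.ncard_edgeSet_eq {G : SimpleGraph V} {H : SimpleGraph W} (f : G ≃g H) :
    G.edgeSet.ncard = H.edgeSet.ncard := by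
  rw [← Nat.card_coe_set_eq, ← Nat.card_coe_set_eq]
  exact Nat.card_congr f.mapEdgeSet

def induceIsoOfEquiv {G : SimpleGraph V} {H : SimpleGraph W} (e : V ≃ W) {s : Set V} {t : Set W}
    (hst : ∀ a, a ∈ s ↔ e a ∈ t) (hadj : ∀ a ∈ s, ∀ b ∈ s, (H.Adj (e a) (e b) ↔ G.Adj a b)) :
    G.induce s ≃g H.induce t :=
  ⟨e.subtypeEquiv hst, fun {a b} => hadj a a.2 b b.2⟩

def induceInduceNeIso (G : SimpleGraph V) {s : Set V} {x : V} (hx : x ∈ s) :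
    (G.induce s).induce {u | u ≠ ⟨x, hx⟩} ≃g G.induce (s \ {x}) where
  toFun u := ⟨u.1.1, u.1.2, fun h => u.2 (Subtype.ext h)⟩
  invFun v := ⟨⟨v.1, v.2.1⟩, fun h => v.2.2 (congrArg Subtype.val h)⟩
  left_inv _ := rfl
  right_inv _ := rfl
  map_rel_iff' := Iff.rfl

lemma Connected.deg_pos [Finite V] {G : SimpleGraph V} (hG : G.Connected) {u v : V}
    (huv : u ≠ v) : 0 < deg G u :=
  (Set.ncard_pos).mpr ((hG.preconnected u v).nonempty_neighborSet_left huv)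

open Finset in
lemma ncard_edgeSet_induce_ne_add_deg [Finite V] (G : SimpleGraph V) (v : V) :
    (G.induce {u | u ≠ v}).edgeSet.ncard + deg G v = G.edgeSet.ncard := by
  classical
  have := Fintype.ofFinite V
  have hle : G.degree v ≤ #G.edgeFinset := by
    rw [← card_incidenceFinset_eq_degree]
    exact card_le_card (G.incidenceFinset_subset v)
  have h := G.card_edgeFinset_induce_compl_singleton v
  rw [card_edgeFinset_deleteIncidenceSet] at h
  rw [deg, Set.ncard_eq_toFinset_card', Set.ncard_eq_toFinset_card', Set.ncard_eq_toFinset_card']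
  change #(G.induce {v}ᶜ).edgeFinset + #(G.neighborFinset v) = #G.edgeFinset
  rw [card_neighborFinset_eq_degree, h, Nat.sub_add_cancel hle]

lemma ncard_edgeSet_induce_diff_singleton_add_deg [Finite V] (G : SimpleGraph V) {s : Set V}
    {x : V} (hx : x ∈ s) :
    (G.induce (s \ {x})).edgeSet.ncard + deg (G.induce s) ⟨x, hx⟩ =
      (G.induce s).edgeSet.ncard := by
  rw [← ncard_edgeSet_induce_ne_add_deg (G.induce s) ⟨x, hx⟩,
    (G.induceInduceNeIso hx).ncard_edgeSet_eq]

section ActivePerm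

variable {G : SimpleGraph V} {v w : V} {l : Equiv.Perm V}

def ActivePerm.iso (hl : ActivePerm G v w l) :
    G.induce ({u | u ≠ w} \ {l.symm v}) ≃g G.induce ({u | u ≠ v} \ {l w}) :=
  induceIsoOfEquiv l
    (fun a => by simp [l.eq_symm_apply, and_comm])
    (fun a ha b hb => (hl a b ha.1 ha.2 hb.1 hb.2).symm)

def ActivePerm.isoOfApplyEq (hl : ActivePerm G v w l) (h : l w = v) :
    G.induce {u | u ≠ w} ≃g G.induce {u | u ≠ v} :=
  have hw : l.symm v = w := l.symm_apply_eq.mpr h.symm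
  induceIsoOfEquiv l (fun _ => (l.injective.ne_iff' h).symm)
    (fun a ha b hb => (hl a b ha (hw ▸ ha) hb (hw ▸ hb)).symm)

end ActivePerm

end SimpleGraph

theorem stmt8_general {V : Type*} [Fintype V] (Up : SimpleGraph V)
    (w xnu : V) (hw : deg Up w = 1) (hnu : deg Up xnu = 2)
    (hT : IsCaterpillar (Up.induce {u : V | u ≠ xnu}))
    (l : Equiv.Perm V) (hl : ActivePerm Up xnu w l) :
    ∃ (h1 : l.symm xnu ≠ w) (h2 : l w ≠ xnu),
      2 ≤ deg (Up.induce {u : V | u ≠ w}) ⟨l.symm xnu, h1⟩ ∧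
      deg (Up.induce {u : V | u ≠ w}) ⟨l.symm xnu, h1⟩ =
        deg (Up.induce {u : V | u ≠ xnu}) ⟨l w, h2⟩ + 1 := by
  have hUe := ncard_edgeSet_induce_ne_add_deg Up w
  have hTe := ncard_edgeSet_induce_ne_add_deg Up xnu
  have h2 : l w ≠ xnu := fun h => by
    have := (hl.isoOfApplyEq h).ncard_edgeSet_eq
    omega
  have h1 : l.symm xnu ≠ w := fun h => h2 (l.symm_apply_eq.mp h).symm
  have hUxe := ncard_edgeSet_induce_diff_singleton_add_deg Up (s := {u | u ≠ w}) h1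
  have hTye := ncard_edgeSet_induce_diff_singleton_add_deg Up (s := {u | u ≠ xnu}) h2
  have hiso := hl.iso.ncard_edgeSet_eq
  obtain ⟨a, ha, hal⟩ :=
    Set.exists_ne_of_one_lt_ncard (s := Up.neighborSet xnu) (by change 1 < deg Up xnu; omega) (l w)
  have hpos := hT.1.deg_pos (u := ⟨l w, h2⟩) (v := ⟨a, (Up.ne_of_adj ha).symm⟩)
    (Subtype.coe_ne_coe.mp hal.symm)
  exact ⟨h1, h2, by omega, by omega⟩

theorem stmt8 {V : Type*} [Fintype V] (Up : SimpleGraph V) (hSun : IsSunshine Up)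
    (w x0 xnu : V) (hw : deg Up w = 1) (hwx0 : Up.Adj w x0) (hnu : deg Up xnu = 2)
    (hU : IsSunshine (Up.induce {u : V | u ≠ w}))
    (hT : IsCaterpillar (Up.induce {u : V | u ≠ xnu}))
    (l : Equiv.Perm V) (hl : ActivePerm Up xnu w l) :
    ∃ (h1 : l.symm xnu ≠ w) (h2 : l w ≠ xnu),
      2 ≤ deg (Up.induce {u : V | u ≠ w}) ⟨l.symm xnu, h1⟩ ∧
      deg (Up.induce {u : V | u ≠ w}) ⟨l.symm xnu, h1⟩ =
        deg (Up.induce {u : V | u ≠ xnu}) ⟨l w, h2⟩ + 1 :=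
  stmt8_general Up w xnu hw hnu hT l hl
end

section
/- Let U be a sunshine graph and T a caterpillar of the same order n, with a common supercard U⁺ that is a sunshine graph whose cycle has length c. Then the number of common cards satisfies b(U, T) ≤ c. -/
open SimpleGraph

/-!
Every card of `T` is acyclic, because a cycle of a graph runs through vertices of degree at
least two, i.e. through the skeleton, and the skeleton of a caterpillar is a path. A card
`U - u` with `u` of degree at most one still contains the cycle of `U`. So each common card is
`U - u` for a skeleton vertex `u` of `U`, and the skeleton of `U` embeds into that of `U⁺`,
whose size is `c`.
-/

namespace SimpleGraph

variable {V W : Type*}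

lemma Embedding.deg_le {G : SimpleGraph V} {H : SimpleGraph W} [Finite W] (f : G ↪g H)
    (v : V) : deg G v ≤ deg H (f v) := by
  rw [deg, ← Set.ncard_image_of_injective _ f.injective]
  refine Set.ncard_le_ncard ?_ (Set.toFinite _)
  rintro _ ⟨u, hu, rfl⟩
  exact f.map_rel_iff.mpr hu

lemma Embedding.ncard_setOf_le_deg_le {G : SimpleGraph V} {H : SimpleGraph W} [Finite W]
    (f : G ↪g H) (k : ℕ) : {v | k ≤ deg G v}.ncard ≤ {w | k ≤ deg H w}.ncard :=
  Set.ncard_le_ncard_of_injOn f (fun v hv => le_trans hv (f.deg_le v)) f.injective.injOn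

lemma deg_eq_degree (G : SimpleGraph V) [Fintype V] [DecidableRel G.Adj] (v : V) :
    deg G v = G.degree v := by
  rw [deg, Set.ncard_eq_toFinset_card', ← card_neighborSet_eq_degree, Set.toFinset_card]

lemma Walk.IsCycle.two_le_deg [Finite V] {G : SimpleGraph V} {u v : V} {p : G.Walk u u}
    (hp : p.IsCycle) (hv : v ∈ p.support) : 2 ≤ deg G v :=
  hp.ncard_neighborSet_toSubgraph_eq_two hv ▸
    Set.ncard_le_ncard (p.toSubgraph.neighborSet_subset v) (Set.toFinite _)

end SimpleGraph

section

variable {V : Type*}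

lemma isAcyclic_of_isAcyclic_skeleton [Finite V] {G : SimpleGraph V}
    (h : (skeleton G).IsAcyclic) : G.IsAcyclic := by
  intro v p hp
  have hS : ∀ x ∈ p.support, x ∈ {x | 2 ≤ deg G x} := fun x hx => hp.two_le_deg hx
  have hG : (G.induce {x | 2 ≤ deg G x}).IsAcyclic := h
  refine hG (p.induce _ hS) ((Walk.isCycle_map_iff_of_injective
    (f := (Embedding.induce {x | 2 ≤ deg G x}).toHom) Subtype.val_injective).mp ?_)
  rwa [Walk.map_induce]

lemma IsCaterpillar.isAcyclic [Finite V] {G : SimpleGraph V} (h : IsCaterpillar G) :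
    G.IsAcyclic :=
  isAcyclic_of_isAcyclic_skeleton h.2.2.1

/-- A tree on `|V|` vertices has `|V| - 1` edges, whereas a 2-regular graph has `|V|`. -/
lemma IsCycleGraph.not_isAcyclic [Finite V] {G : SimpleGraph V} (h : IsCycleGraph G) :
    ¬ G.IsAcyclic := by
  classical
  cases nonempty_fintype V
  intro ha
  have hedges := IsTree.card_edgeFinset ⟨h.1, ha⟩
  have hsum := G.sum_degrees_eq_twice_card_edges
  simp only [← deg_eq_degree, h.2, Finset.sum_const, Finset.card_univ, smul_eq_mul] at hsum
  have := Fintype.card_pos_iff.mpr h.1.nonempty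
  omega

noncomputable def cardAtIso [Fintype V] [DecidableEq V] (G : SimpleGraph V) (v : V) :
    cardAt G v ≃g G.induce {u | u ≠ v} where
  toEquiv := Fintype.equivOfCardEq
    (show Fintype.card (Fin (Fintype.card V - 1)) = Fintype.card {u : V // u ≠ v} by
      simp [Fintype.card_subtype_compl])
  map_rel_iff' := Iff.rfl

lemma isAcyclic_cardAt [Fintype V] [DecidableEq V] {G : SimpleGraph V} (h : G.IsAcyclic)
    (v : V) : (cardAt G v).IsAcyclic :=
  (cardAtIso G v).isAcyclic_iff.mpr (h.embedding (Embedding.induce _))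

lemma IsSunshine.not_isAcyclic_cardAt [Fintype V] [DecidableEq V] {G : SimpleGraph V}
    (h : IsSunshine G) {v : V} (hv : deg G v < 2) : ¬ (cardAt G v).IsAcyclic := by
  rw [(cardAtIso G v).isAcyclic_iff]
  have hS : {u | 2 ≤ deg G u} ⊆ {u | u ≠ v} := by
    rintro u hu rfl
    exact not_le.mpr hv hu
  exact fun hacyc => h.2.not_isAcyclic (hacyc.embedding (induceHomOfLE G hS))

lemma commonCards_le_ncard_of_forall_cardAt [Fintype V] [DecidableEq V] {G H : SimpleGraph V}
    (P : SimpleGraph (Fin (Fintype.card V - 1)) → Prop)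
    (hP : ∀ {A B : SimpleGraph (Fin (Fintype.card V - 1))}, (A ≃g B) → P A → P B)
    (hH : ∀ v, P (cardAt H v)) : commonCards G H ≤ {v | P (cardAt G v)}.ncard := by
  classical
  let Q : IsoClass (Fintype.card V - 1) → Prop :=
    Quotient.lift P fun _ _ ⟨e⟩ => propext ⟨hP e, hP e.symm⟩
  have hsub : deck G ∩ deck H ≤ (deck G).filter Q := by
    refine Multiset.le_filter.mpr ⟨Multiset.inter_le_left, fun c hc => ?_⟩
    obtain ⟨v, -, rfl⟩ := Multiset.mem_map.mp (Multiset.mem_of_le Multiset.inter_le_right hc)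
    exact hH v
  calc commonCards G H ≤ Multiset.card ((deck G).filter Q) := by
        unfold commonCards
        convert Multiset.card_le_card hsub
    _ = {v | P (cardAt G v)}.ncard := by
        rw [deck, Multiset.filter_map, Multiset.card_map, ← Finset.filter_val, ← Finset.card_def,
          Set.ncard_eq_toFinset_card']
        congr 1
        ext v
        simp [Q]

end

theorem stmt9_general (n : ℕ) (U T : SimpleGraph (Fin n)) (hU : IsSunshine U) (hT : IsCaterpillar T)
    (Up : SimpleGraph (Fin (n + 1)))
    (h1 : IsSupercardOf Up U) :
    commonCards U T ≤ {v : Fin (n + 1) | 2 ≤ deg Up v}.ncard := by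
  obtain ⟨w, ⟨e⟩⟩ := h1
  calc commonCards U T ≤ {u | (cardAt U u).IsAcyclic}.ncard :=
        commonCards_le_ncard_of_forall_cardAt _ (fun e => e.isAcyclic_iff.mp)
          (isAcyclic_cardAt hT.isAcyclic)
    _ ≤ {u | 2 ≤ deg U u}.ncard :=
        Set.ncard_le_ncard (fun u hu => not_lt.mp fun hu' => hU.not_isAcyclic_cardAt hu' hu)
    _ ≤ {v | 2 ≤ deg Up v}.ncard :=
        ((Embedding.induce _).comp e.toEmbedding).ncard_setOf_le_deg_le 2

theorem stmt9 (n : ℕ) (U T : SimpleGraph (Fin n)) (hU : IsSunshine U) (hT : IsCaterpillar T)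
    (hb : 5 ≤ commonCards U T) (Up : SimpleGraph (Fin (n + 1)))
    (h1 : IsSupercardOf Up U) (h2 : IsSupercardOf Up T) (hS : IsSunshine Up) :
    commonCards U T ≤ {v : Fin (n + 1) | 2 ≤ deg Up v}.ncard :=
  stmt9_general n U T hU hT Up h1
end

section
/- Let U⁺ be a sunshine graph with cycle x₀…x_{c−1}x₀, a supercard of a sunshine graph U = U⁺ − w (w a leaf adjacent to x₀) and a caterpillar T = U⁺ − x_ν. Let θ ∈ B_U, i.e., θ is an active permutation with θ(U) = U⁺ − θ(w), and let u ∈ V(U⁺) \ {w, θ⁻¹(w)}. Then: (a) d_{U⁺}(u) = d_{U⁺}(θ(u)) + 1 if and only if u = x₀ and θ(w) is not adjacent to θ(x₀); (b) d_{U⁺}(u) = d_{U⁺}(θ(u)) − 1 if and only if u ≠ x₀ and θ(w) is adjacent to θ(u); (c) d_{U⁺}(u) = d_{U⁺}(θ(u)) otherwise. -/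
open SimpleGraph

/-
Deleting `w` from `N(u)` and `θ w` from `N(θ u)` leaves two sets that `θ` matches up, so
`deg u + [θ w ∼ θ u] = deg (θ u) + [w ∼ u]`; as `w` is a leaf hanging at `x₀`, `[w ∼ u]` is
`[u = x₀]`, and the three cases are read off this identity.
-/

lemma SimpleGraph.deg_eq_ncard_neighborSet_diff_add {V : Type*} [Finite V] (G : SimpleGraph V)
    [DecidableRel G.Adj] (v z : V) :
    deg G v = (G.neighborSet v \ {z}).ncard + if G.Adj v z then 1 else 0 := by
  split_ifs with h
  · exact (Set.ncard_sdiff_singleton_add_one h).symm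
  · rw [Set.sdiff_singleton_eq_self (s := G.neighborSet v) h, add_zero]
    rfl

lemma SimpleGraph.adj_leaf_iff {V : Type*} {G : SimpleGraph V} {w x : V}
    (hw : deg G w = 1) (hwx : G.Adj w x) (u : V) : G.Adj w u ↔ u = x := by
  obtain ⟨a, ha⟩ := Set.ncard_eq_one.mp hw
  have hx : x ∈ G.neighborSet w := hwx
  rw [ha, Set.mem_singleton_iff] at hx
  change u ∈ G.neighborSet w ↔ _
  rw [ha, Set.mem_singleton_iff, hx]

namespace IsCardIso

variable {V : Type*} {Up : SimpleGraph V} {w : V} {θ : Equiv.Perm V}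

lemma preimage_neighborSet_diff (hθ : IsCardIso Up w θ) {u : V} (hu : u ≠ w) :
    θ ⁻¹' (Up.neighborSet (θ u) \ {θ w}) = Up.neighborSet u \ {w} := by
  ext a
  simp only [Set.mem_preimage, Set.mem_sdiff, mem_neighborSet, Set.mem_singleton_iff,
    θ.injective.eq_iff]
  exact and_congr_left fun ha => (hθ u a hu ha).symm

open scoped Classical in
lemma deg_add_ite_adj [Finite V] (hθ : IsCardIso Up w θ) {u : V} (hu : u ≠ w) :
    deg Up u + (if Up.Adj (θ w) (θ u) then 1 else 0)
      = deg Up (θ u) + (if Up.Adj w u then 1 else 0) := by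
  have hcard : (Up.neighborSet (θ u) \ {θ w}).ncard = (Up.neighborSet u \ {w}).ncard := by
    rw [← hθ.preimage_neighborSet_diff hu,
      Set.ncard_preimage_of_injective_subset_range θ.injective (by simp)]
  rw [Up.deg_eq_ncard_neighborSet_diff_add u w, Up.deg_eq_ncard_neighborSet_diff_add (θ u) (θ w),
    hcard, Up.adj_comm u, Up.adj_comm (θ u)]
  ring

end IsCardIso

lemma Nat.add_ite_trichotomy {d e : ℕ} {P Q : Prop} [Decidable P] [Decidable Q]
    (h : d + (if Q then 1 else 0) = e + (if P then 1 else 0)) :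
    (d = e + 1 ↔ P ∧ ¬ Q) ∧ (d + 1 = e ↔ ¬ P ∧ Q) ∧ (¬ (P ∧ ¬ Q) → ¬ (¬ P ∧ Q) → d = e) := by
  split_ifs at h with hQ hP hP <;>
    simp only [hP, hQ, not_true_eq_false, not_false_eq_true, and_true, and_false, and_self,
      iff_true, iff_false, forall_const, IsEmpty.forall_iff] <;>
    omega

theorem stmt10_general {V : Type*} [Fintype V] (Up : SimpleGraph V)
    (w x0 : V) (hw : deg Up w = 1) (hwx0 : Up.Adj w x0)
    (θ : Equiv.Perm V) (hθ : IsCardIso Up w θ)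
    (u : V) (hu1 : u ≠ w) :
    (deg Up u = deg Up (θ u) + 1 ↔ (u = x0 ∧ ¬ Up.Adj (θ w) (θ x0))) ∧
    (deg Up u + 1 = deg Up (θ u) ↔ (u ≠ x0 ∧ Up.Adj (θ w) (θ u))) ∧
    (¬ (u = x0 ∧ ¬ Up.Adj (θ w) (θ x0)) → ¬ (u ≠ x0 ∧ Up.Adj (θ w) (θ u)) →
      deg Up u = deg Up (θ u)) := by
  classical
  have key := hθ.deg_add_ite_adj hu1
  simp only [adj_leaf_iff hw hwx0] at key
  have hA : (u = x0 ∧ ¬ Up.Adj (θ w) (θ x0)) ↔ (u = x0 ∧ ¬ Up.Adj (θ w) (θ u)) := by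
    constructor <;> rintro ⟨rfl, h⟩ <;> exact ⟨rfl, h⟩
  rw [hA]
  exact Nat.add_ite_trichotomy key

theorem stmt10 {V : Type*} [Fintype V] (Up : SimpleGraph V) (hSun : IsSunshine Up)
    (w x0 xnu : V) (hw : deg Up w = 1) (hwx0 : Up.Adj w x0) (hnu : deg Up xnu = 2)
    (hU : IsSunshine (Up.induce {u : V | u ≠ w}))
    (hT : IsCaterpillar (Up.induce {u : V | u ≠ xnu}))
    (θ : Equiv.Perm V) (hθ : IsCardIso Up w θ)
    (u : V) (hu1 : u ≠ w) (hu2 : u ≠ θ.symm w) :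
    (deg Up u = deg Up (θ u) + 1 ↔ (u = x0 ∧ ¬ Up.Adj (θ w) (θ x0))) ∧
    (deg Up u + 1 = deg Up (θ u) ↔ (u ≠ x0 ∧ Up.Adj (θ w) (θ u))) ∧
    (¬ (u = x0 ∧ ¬ Up.Adj (θ w) (θ x0)) → ¬ (u ≠ x0 ∧ Up.Adj (θ w) (θ u)) →
      deg Up u = deg Up (θ u)) :=
  stmt10_general Up w x0 hw hwx0 θ hθ u hu1
end

section
/- With U⁺, U = U⁺ − w, w a leaf adjacent to x₀, and B_U as above: for θ ∈ B_U, one has d_{U⁺}(x₀) = d_{U⁺}(θ(x₀)) + 1 if and only if θ is not an automorphism of U⁺, and d_{U⁺}(x₀) = d_{U⁺}(θ(x₀)) if and only if θ is an automorphism of U⁺. In particular, if θ(x₀) = x₀ then θ ∈ Aut(U⁺). -/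
open SimpleGraph

/-! Since `θ` maps `G - w` isomorphically onto `G - θ w`, these two graphs have equally many
edges, so `θ w` is again a leaf; and `θ` maps `N(x₀) ∖ {w}` onto `N(θ x₀) ∖ {θ w}`. Hence
`deg (θ x₀)` is `deg x₀` or `deg x₀ - 1` according as the leaf `θ w` hangs at `θ x₀` or not, and
`θ` is an automorphism exactly in the first case. -/

section CardIso

variable {V : Type*} {G : SimpleGraph V} {w : V} {θ : Equiv.Perm V}

lemma deg_eq_degree [Fintype V] [DecidableRel G.Adj] (v : V) : deg G v = G.degree v := by
  rw [deg, ← Nat.card_coe_set_eq, Nat.card_eq_fintype_card, card_neighborSet_eq_degree]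

lemma neighborSet_eq_singleton_of_deg_eq_one {v u : V} (hv : deg G v = 1) (hu : G.Adj v u) :
    G.neighborSet v = {u} := by
  obtain ⟨a, ha⟩ := Set.ncard_eq_one.mp hv
  rw [ha, ← Set.mem_singleton_iff.mp (ha ▸ hu : u ∈ ({a} : Set V))]

namespace IsCardIso

def deleteIncidenceSetIso (hθ : IsCardIso G w θ) :
    G.deleteIncidenceSet w ≃g G.deleteIncidenceSet (θ w) where
  toEquiv := θ
  map_rel_iff' {a b} := by
    simp only [deleteIncidenceSet_adj, ne_eq, θ.injective.eq_iff]
    constructor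
    · rintro ⟨hab, ha, hb⟩
      exact ⟨(hθ a b ha hb).mpr hab, ha, hb⟩
    · rintro ⟨hab, ha, hb⟩
      exact ⟨(hθ a b ha hb).mp hab, ha, hb⟩

lemma deg_apply_self [Fintype V] (hθ : IsCardIso G w θ) : deg G (θ w) = deg G w := by
  classical
  have hE := hθ.deleteIncidenceSetIso.card_edgeFinset_eq
  rw [card_edgeFinset_deleteIncidenceSet, card_edgeFinset_deleteIncidenceSet] at hE
  have := G.degree_le_card_edgeFinset w
  have := G.degree_le_card_edgeFinset (θ w)
  rw [deg_eq_degree, deg_eq_degree]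
  omega

lemma image_neighborSet_diff (hθ : IsCardIso G w θ) {a : V} (ha : a ≠ w) :
    θ '' (G.neighborSet a \ {w}) = G.neighborSet (θ a) \ {θ w} := by
  ext c
  constructor
  · rintro ⟨b, ⟨hb, hbw⟩, rfl⟩
    exact ⟨(hθ a b ha hbw).mp hb, fun h => hbw (θ.injective h)⟩
  · rintro ⟨hc, hcw⟩
    have hcw' : θ.symm c ≠ w := fun h => hcw (θ.symm_apply_eq.mp h)
    refine ⟨θ.symm c, ⟨(hθ a _ ha hcw').mpr (by simpa using hc), hcw'⟩, by simp⟩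

lemma ncard_neighborSet_diff (hθ : IsCardIso G w θ) {a : V} (ha : a ≠ w) :
    (G.neighborSet (θ a) \ {θ w}).ncard = (G.neighborSet a \ {w}).ncard := by
  rw [← hθ.image_neighborSet_diff ha, Set.ncard_image_of_injective _ θ.injective]

lemma deg_apply_of_adj [Finite V] (hθ : IsCardIso G w θ) {a : V} (ha : G.Adj w a)
    (hθa : G.Adj (θ w) (θ a)) : deg G (θ a) = deg G a := by
  have hθN := Set.ncard_sdiff_singleton_add_one (s := G.neighborSet (θ a)) hθa.symm
  have hN := Set.ncard_sdiff_singleton_add_one (s := G.neighborSet a) ha.symm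
  rw [deg, deg, ← hθN, ← hN, hθ.ncard_neighborSet_diff ha.ne']

lemma deg_eq_deg_apply_add_one [Finite V] (hθ : IsCardIso G w θ) {a : V} (ha : G.Adj w a)
    (hθa : ¬ G.Adj (θ w) (θ a)) : deg G a = deg G (θ a) + 1 := by
  have hN := Set.ncard_sdiff_singleton_add_one (s := G.neighborSet a) ha.symm
  have hθN : G.neighborSet (θ a) \ {θ w} = G.neighborSet (θ a) :=
    Set.sdiff_singleton_eq_self fun h => hθa (G.adj_symm h)
  rw [deg, deg, ← hN, ← hθ.ncard_neighborSet_diff ha.ne', hθN]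

/-- `θ w` is a leaf like `w` (`deg_apply_self`), so adjacency at `w` is determined by the
unique neighbour. -/
lemma isAutG_iff [Fintype V] (hθ : IsCardIso G w θ) (hw : deg G w = 1) {x : V}
    (hwx : G.Adj w x) : IsAutG G θ ↔ G.Adj (θ w) (θ x) := by
  refine ⟨fun h => (h w x).mpr hwx, fun hθx => ?_⟩
  have hNw := neighborSet_eq_singleton_of_deg_eq_one hw hwx
  have hNθw := neighborSet_eq_singleton_of_deg_eq_one (hθ.deg_apply_self.trans hw) hθx
  have hleaf (b : V) : G.Adj (θ w) (θ b) ↔ G.Adj w b := by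
    rw [← mem_neighborSet, ← mem_neighborSet, hNw, hNθw, Set.mem_singleton_iff,
      Set.mem_singleton_iff, θ.injective.eq_iff]
  intro a b
  by_cases ha : a = w
  · subst ha
    exact hleaf b
  by_cases hb : b = w
  · subst hb
    rw [G.adj_comm, G.adj_comm a]
    exact hleaf a
  exact (hθ a b ha hb).symm

end IsCardIso

end CardIso

theorem stmt11_general {V : Type*} [Fintype V] (Up : SimpleGraph V)
    (w x0 : V) (hw : deg Up w = 1) (hwx0 : Up.Adj w x0)
    (θ : Equiv.Perm V) (hθ : IsCardIso Up w θ) :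
    (deg Up x0 = deg Up (θ x0) + 1 ↔ ¬ IsAutG Up θ) ∧
    (deg Up x0 = deg Up (θ x0) ↔ IsAutG Up θ) ∧
    (θ x0 = x0 → IsAutG Up θ) := by
  rw [hθ.isAutG_iff hw hwx0]
  by_cases hθx0 : Up.Adj (θ w) (θ x0)
  · have hdeg := hθ.deg_apply_of_adj hwx0 hθx0
    simp only [hθx0, hdeg, not_true_eq_false, iff_false, implies_true, and_true]
    omega
  · have hdeg := hθ.deg_eq_deg_apply_add_one hwx0 hθx0
    have hmoved : θ x0 ≠ x0 := fun hfix => by rw [hfix] at hdeg; omega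
    simp only [hθx0, hdeg, not_false_eq_true, iff_false]
    exact ⟨trivial, by omega, hmoved⟩

theorem stmt11 {V : Type*} [Fintype V] (Up : SimpleGraph V) (hSun : IsSunshine Up)
    (w x0 xnu : V) (hw : deg Up w = 1) (hwx0 : Up.Adj w x0) (hnu : deg Up xnu = 2)
    (hU : IsSunshine (Up.induce {u : V | u ≠ w}))
    (hT : IsCaterpillar (Up.induce {u : V | u ≠ xnu}))
    (θ : Equiv.Perm V) (hθ : IsCardIso Up w θ) :
    (deg Up x0 = deg Up (θ x0) + 1 ↔ ¬ IsAutG Up θ) ∧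
    (deg Up x0 = deg Up (θ x0) ↔ IsAutG Up θ) ∧
    (θ x0 = x0 → IsAutG Up θ) :=
  stmt11_general Up w x0 hw hwx0 θ hθ
end
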